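/- arXiv:2012.08126 — 2 statements merged into one kernel-verified Lean document; each statement's English description precedes it below -/
import Mathlib

section
/- If F = c·I + YᵀY with c > 0 and g* = F⁻¹Uᵀ(UF⁻¹Uᵀ)⁻¹ũ, then for any g with Ug = ũ one has c·‖g*‖₂² + ‖Y g*‖₂² ≤ c·‖g‖₂² + ‖Y g‖₂². -/
/-!
The quadratic form `c‖g‖² + ‖Yg‖²` is `gᵀFg` with `F = cI + YᵀY` positive definite. The point
`g*` is feasible (`Ug* = ũ`) and satisfies the Lagrange condition `Fg* = Uᵀν` with
`ν = (UF⁻¹Uᵀ)⁻¹ũ`, where `UF⁻¹Uᵀ` is positive definite because `U` has independent rows. For a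
feasible `g = g* + h` one has `Uh = 0`, so the cross term `hᵀFg* = (Uh)ᵀν` vanishes and
`gᵀFg = g*ᵀFg* + hᵀFh ≥ g*ᵀFg*`.
-/

open Matrix

namespace Matrix

variable {m n : Type*} [Fintype m] [Fintype n]

theorem linearIndependent_row_of_rank_eq_card {K : Type*} [Field K] {A : Matrix m n K}
    (h : A.rank = Fintype.card m) : LinearIndependent K A.row :=
  linearIndependent_iff_card_eq_finrank_span.mpr <| by
    rw [Set.finrank, ← rank_eq_finrank_span_row, h]

theorem dotProduct_smul_one_add_transpose_mul_self_mulVec {R p : Type*} [CommRing R] [Fintype p]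
    [DecidableEq n] (c : R) (Y : Matrix p n R) (v : n → R) :
    v ⬝ᵥ (c • (1 : Matrix n n R) + Yᵀ * Y) *ᵥ v = c * ∑ i, v i ^ 2 + ∑ i, (Y *ᵥ v) i ^ 2 := by
  rw [add_mulVec, dotProduct_add, smul_mulVec, one_mulVec, dotProduct_smul, smul_eq_mul,
    ← mulVec_mulVec, dotProduct_mulVec, vecMul_transpose]
  simp only [dotProduct, sq]

variable {R : Type*} [CommRing R] [PartialOrder R] [IsOrderedRing R] [StarRing R] [TrivialStar R]

theorem PosSemidef.dotProduct_mulVec_le_of_mulVec_eq_transpose_mulVec {F : Matrix n n R}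
    (hF : F.PosSemidef) {U : Matrix m n R} {x g : n → R} {ν : m → R}
    (hFx : F *ᵥ x = Uᵀ *ᵥ ν) (hUg : U *ᵥ g = U *ᵥ x) :
    x ⬝ᵥ F *ᵥ x ≤ g ⬝ᵥ F *ᵥ g := by
  obtain ⟨h, rfl⟩ : ∃ h, g = x + h := ⟨g - x, by abel⟩
  have hUh : U *ᵥ h = 0 := by simpa [mulVec_add] using hUg
  have hcross : h ⬝ᵥ F *ᵥ x = 0 := by
    rw [hFx, dotProduct_mulVec, vecMul_transpose, hUh, zero_dotProduct]
  have hcross' : x ⬝ᵥ F *ᵥ h = 0 := by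
    have hFt : Fᵀ = F := by simpa [conjTranspose_eq_transpose_of_trivial] using hF.isHermitian.eq
    rw [dotProduct_mulVec, ← hFt, vecMul_transpose, dotProduct_comm, hcross]
  have hh : 0 ≤ h ⬝ᵥ F *ᵥ h := by simpa using hF.dotProduct_mulVec_nonneg h
  rw [mulVec_add, dotProduct_add, add_dotProduct, add_dotProduct, hcross, hcross', add_zero,
    zero_add]
  exact le_add_of_nonneg_right hh

end Matrix

theorem stmt12_general (M L p : ℕ) (c : ℝ) (hc : 0 < c)
    (Y : Matrix (Fin p) (Fin M) ℝ)
    (U : Matrix (Fin L) (Fin M) ℝ) (hU : U.rank = L)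
    (F : Matrix (Fin M) (Fin M) ℝ)
    (hF : F = c • (1 : Matrix (Fin M) (Fin M) ℝ) + Yᵀ * Y)
    (utilde : Fin L → ℝ) (gstar : Fin M → ℝ)
    (hg : gstar = (F⁻¹ * Uᵀ * (U * F⁻¹ * Uᵀ)⁻¹).mulVec utilde) :
    ∀ g : Fin M → ℝ, U.mulVec g = utilde →
      c * ∑ i, gstar i ^ 2 + ∑ i, (Y.mulVec gstar) i ^ 2 ≤
      c * ∑ i, g i ^ 2 + ∑ i, (Y.mulVec g) i ^ 2 := by
  intro g hUg
  have hFpd : F.PosDef := hF ▸ (PosDef.one.smul hc).add_posSemidef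
    (by simpa using posSemidef_conjTranspose_mul_self Y)
  have hW : (U * F⁻¹ * Uᵀ).PosDef := by
    simpa [conjTranspose_eq_transpose_of_trivial] using hFpd.inv.mul_mul_conjTranspose_same
      (vecMul_injective_iff.mpr (linearIndependent_row_of_rank_eq_card (by simpa using hU)))
  have hUgstar : U *ᵥ gstar = utilde := by
    rw [hg, mulVec_mulVec, ← Matrix.mul_assoc, ← Matrix.mul_assoc,
      mul_nonsing_inv _ ((isUnit_iff_isUnit_det _).mp hW.isUnit), one_mulVec]
  have hFgstar : F *ᵥ gstar = Uᵀ *ᵥ ((U * F⁻¹ * Uᵀ)⁻¹ *ᵥ utilde) := by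
    rw [hg, mulVec_mulVec, mulVec_mulVec, Matrix.mul_assoc F⁻¹,
      mul_nonsing_inv_cancel_left _ _ ((isUnit_iff_isUnit_det _).mp hFpd.isUnit)]
  simp only [← dotProduct_smul_one_add_transpose_mul_self_mulVec, ← hF]
  exact hFpd.posSemidef.dotProduct_mulVec_le_of_mulVec_eq_transpose_mulVec hFgstar
    (hUg.trans hUgstar.symm)

theorem stmt12 (M L p : ℕ) (hLM : L ≤ M) (c : ℝ) (hc : 0 < c)
    (Y : Matrix (Fin p) (Fin M) ℝ)
    (U : Matrix (Fin L) (Fin M) ℝ) (hU : U.rank = L)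
    (F : Matrix (Fin M) (Fin M) ℝ)
    (hF : F = c • (1 : Matrix (Fin M) (Fin M) ℝ) + Yᵀ * Y)
    (utilde : Fin L → ℝ) (gstar : Fin M → ℝ)
    (hg : gstar = (F⁻¹ * Uᵀ * (U * F⁻¹ * Uᵀ)⁻¹).mulVec utilde) :
    ∀ g : Fin M → ℝ, U.mulVec g = utilde →
      c * ∑ i, gstar i ^ 2 + ∑ i, (Y.mulVec gstar) i ^ 2 ≤
      c * ∑ i, g i ^ 2 + ∑ i, (Y.mulVec g) i ^ 2 :=
  stmt12_general M L p c hc Y U hU F hF utilde gstar hg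
end

section
/- If c > 0 and Y is any real matrix with M columns, then the minimizer g* of gᵀ(cI + YᵀY)g subject to Ug = ũ (U full row rank) satisfies ‖g*‖₂² ≤ (1/c)·ũᵀ(U(cI+YᵀY)⁻¹Uᵀ)⁻¹ũ ≤ (1/c)·(c + λ_max(YᵀY))·ũᵀ(UUᵀ)⁻¹ũ. -/
/-!
`F = c • 1 + Yᵀ * Y` is positive definite. On the affine space `{g | U *ᵥ g = ũ}` the form
`g ⬝ᵥ F *ᵥ g` is minimised at `g₀ = F⁻¹ Uᵀ (U F⁻¹ Uᵀ)⁻¹ ũ`, with value `ũ ⬝ᵥ (U F⁻¹ Uᵀ)⁻¹ ũ`: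
`F *ᵥ g₀` lies in the range of `Uᵀ`, so it is orthogonal to every `h` with `U *ᵥ h = 0`, and the
cross term in `(g₀ + h) ⬝ᵥ F *ᵥ (g₀ + h)` vanishes. The first bound is then
`c ‖g*‖² ≤ g* ⬝ᵥ F *ᵥ g* ≤ g₀ ⬝ᵥ F *ᵥ g₀`. For the second, compare the minimum with the value at the
minimum-norm solution `g₁ = Uᵀ (U Uᵀ)⁻¹ ũ` (the minimiser for `F = 1`), where
`g₁ ⬝ᵥ F *ᵥ g₁ = c ‖g₁‖² + ‖Y g₁‖² ≤ (c + λ_max) ‖g₁‖² = (c + λ_max) ũ ⬝ᵥ (U Uᵀ)⁻¹ ũ`.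
-/

open Matrix
open scoped ComplexOrder

namespace Matrix

variable {m n : Type*} [Fintype m] [Fintype n]

lemma IsHermitian.posSemidef_smul_one_sub [DecidableEq n] {𝕜 : Type*} [RCLike 𝕜] {A : Matrix n n 𝕜}
    (hA : A.IsHermitian) {μ : ℝ} (hμ : ∀ i, hA.eigenvalues i ≤ μ) :
    ((μ : 𝕜) • 1 - A).PosSemidef := by
  set V : Matrix n n 𝕜 := ↑hA.eigenvectorUnitary
  have hV : V * star V = 1 := Unitary.coe_mul_star_self _
  have hD : diagonal (fun i => ((μ - hA.eigenvalues i : ℝ) : 𝕜)) =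
      (μ : 𝕜) • 1 - diagonal (RCLike.ofReal ∘ hA.eigenvalues) := by
    ext i j
    by_cases h : i = j <;> simp [h, Algebra.algebraMap_eq_smul_one, sub_smul]
  have hdiag : (μ : 𝕜) • 1 - A = V * diagonal (fun i => ((μ - hA.eigenvalues i : ℝ) : 𝕜)) * Vᴴ := by
    rw [hD, ← star_eq_conjTranspose, mul_sub, sub_mul, Matrix.mul_smul V (μ : 𝕜), mul_one,
      Matrix.smul_mul (μ : 𝕜) V, hV]
    exact congrArg _ hA.spectral_theorem
  rw [hdiag]
  exact (PosSemidef.diagonal fun i => by simpa using hμ i).mul_mul_conjTranspose_same V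

lemma IsHermitian.dotProduct_mulVec_le_iSup_eigenvalues_mul [DecidableEq n] {A : Matrix n n ℝ}
    (hA : A.IsHermitian) (x : n → ℝ) : x ⬝ᵥ A *ᵥ x ≤ (⨆ i, hA.eigenvalues i) * (x ⬝ᵥ x) := by
  have := (hA.posSemidef_smul_one_sub fun i => le_ciSup (Set.finite_range _).bddAbove i)
    |>.dotProduct_mulVec_nonneg x
  simp only [star_trivial, sub_mulVec, smul_mulVec, one_mulVec, dotProduct_sub, dotProduct_smul,
    smul_eq_mul, RCLike.ofReal_real_eq_id, id] at this
  linarith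

lemma dotProduct_transpose_mul_self_mulVec {R : Type*} [CommSemiring R] (Y : Matrix m n R)
    (x : n → R) : x ⬝ᵥ (Yᵀ * Y) *ᵥ x = (Y *ᵥ x) ⬝ᵥ (Y *ᵥ x) := by
  rw [← mulVec_mulVec, dotProduct_mulVec, vecMul_transpose]

section Regularized

variable [DecidableEq n] {c : ℝ} (Y : Matrix m n ℝ)

lemma posDef_smul_one_add_transpose_mul_self (hc : 0 < c) : (c • 1 + Yᵀ * Y).PosDef :=
  (PosDef.one.smul hc).add_posSemidef
    (by simpa [conjTranspose_eq_transpose_of_trivial] using posSemidef_conjTranspose_mul_self Y)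

lemma dotProduct_smul_one_add_transpose_mul_self_mulVec_s17 (x : n → ℝ) :
    x ⬝ᵥ (c • 1 + Yᵀ * Y) *ᵥ x = c * (x ⬝ᵥ x) + (Y *ᵥ x) ⬝ᵥ (Y *ᵥ x) := by
  rw [add_mulVec, dotProduct_add, smul_mulVec, one_mulVec, dotProduct_smul, smul_eq_mul,
    dotProduct_transpose_mul_self_mulVec]

lemma mul_dotProduct_self_le_dotProduct_mulVec (x : n → ℝ) :
    c * (x ⬝ᵥ x) ≤ x ⬝ᵥ (c • 1 + Yᵀ * Y) *ᵥ x := by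
  rw [dotProduct_smul_one_add_transpose_mul_self_mulVec_s17]
  exact le_add_of_nonneg_right (Fintype.sum_nonneg fun _ => mul_self_nonneg _)

lemma dotProduct_mulVec_le_add_iSup_eigenvalues_mul (hY : (Yᵀ * Y).IsHermitian) (x : n → ℝ) :
    x ⬝ᵥ (c • 1 + Yᵀ * Y) *ᵥ x ≤ (c + ⨆ i, hY.eigenvalues i) * (x ⬝ᵥ x) := by
  rw [dotProduct_smul_one_add_transpose_mul_self_mulVec_s17, ← dotProduct_transpose_mul_self_mulVec,
    add_mul]
  exact add_le_add_right (hY.dotProduct_mulVec_le_iSup_eigenvalues_mul x) _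

end Regularized

lemma mulVec_transpose_injective_of_rank_eq {K : Type*} [Field K] {U : Matrix m n K}
    (hU : U.rank = Fintype.card m) : Function.Injective Uᵀ.mulVec := by
  rw [show Uᵀ.mulVec = U.vecMul from funext fun z => mulVec_transpose U z, vecMul_injective_iff,
    linearIndependent_iff_card_eq_finrank_span, Set.finrank, ← rank_eq_finrank_span_row, hU]

section ConstrainedMinimizer

variable [DecidableEq n] {F : Matrix n n ℝ} {U : Matrix m n ℝ}

lemma PosDef.mul_inv_mul_transpose (hF : F.PosDef) (hU : Function.Injective Uᵀ.mulVec) :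
    (U * F⁻¹ * Uᵀ).PosDef := by
  simpa [conjTranspose_eq_transpose_of_trivial] using hF.inv.conjTranspose_mul_mul_same hU

variable [DecidableEq m]

noncomputable def constrainedMinimizer (F : Matrix n n ℝ) (U : Matrix m n ℝ) (u : m → ℝ) : n → ℝ :=
  F⁻¹ *ᵥ Uᵀ *ᵥ (U * F⁻¹ * Uᵀ)⁻¹ *ᵥ u

lemma mulVec_constrainedMinimizer (hF : F.PosDef) (hU : Function.Injective Uᵀ.mulVec) (u : m → ℝ) :
    U *ᵥ constrainedMinimizer F U u = u := by
  rw [constrainedMinimizer, mulVec_mulVec, mulVec_mulVec, mulVec_mulVec,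
    mul_nonsing_inv _ (hF.mul_inv_mul_transpose hU).det_pos.ne'.isUnit, one_mulVec]

lemma mulVec_constrainedMinimizer_eq_transpose_mulVec (hF : IsUnit F.det) (u : m → ℝ) :
    F *ᵥ constrainedMinimizer F U u = Uᵀ *ᵥ (U * F⁻¹ * Uᵀ)⁻¹ *ᵥ u := by
  rw [constrainedMinimizer, mulVec_mulVec, mul_nonsing_inv _ hF, one_mulVec]

lemma constrainedMinimizer_dotProduct_mulVec (hF : F.PosDef) (hU : Function.Injective Uᵀ.mulVec)
    (u : m → ℝ) :
    constrainedMinimizer F U u ⬝ᵥ F *ᵥ constrainedMinimizer F U u =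
      u ⬝ᵥ (U * F⁻¹ * Uᵀ)⁻¹ *ᵥ u := by
  rw [mulVec_constrainedMinimizer_eq_transpose_mulVec hF.det_pos.ne'.isUnit, dotProduct_mulVec,
    vecMul_transpose, mulVec_constrainedMinimizer hF hU]

lemma constrainedMinimizer_dotProduct_mulVec_le (hF : F.PosDef) (hU : Function.Injective Uᵀ.mulVec)
    {u : m → ℝ} {g : n → ℝ} (hg : U *ᵥ g = u) :
    constrainedMinimizer F U u ⬝ᵥ F *ᵥ constrainedMinimizer F U u ≤ g ⬝ᵥ F *ᵥ g := by
  set g₀ := constrainedMinimizer F U u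
  have hker : U *ᵥ (g - g₀) = 0 := by
    rw [mulVec_sub, hg, mulVec_constrainedMinimizer hF hU, sub_self]
  have horth : (g - g₀) ⬝ᵥ F *ᵥ g₀ = 0 := by
    rw [mulVec_constrainedMinimizer_eq_transpose_mulVec hF.det_pos.ne'.isUnit, dotProduct_mulVec,
      vecMul_transpose, hker, zero_dotProduct]
  have hsymm : g₀ ⬝ᵥ F *ᵥ (g - g₀) = (g - g₀) ⬝ᵥ F *ᵥ g₀ := by
    rw [dotProduct_mulVec, ← mulVec_transpose, dotProduct_comm,
      ← conjTranspose_eq_transpose_of_trivial, hF.isHermitian.eq]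
  have hnonneg : 0 ≤ (g - g₀) ⬝ᵥ F *ᵥ (g - g₀) := by
    simpa using hF.posSemidef.dotProduct_mulVec_nonneg (g - g₀)
  have hexpand : g ⬝ᵥ F *ᵥ g = g₀ ⬝ᵥ F *ᵥ g₀ + g₀ ⬝ᵥ F *ᵥ (g - g₀) + (g - g₀) ⬝ᵥ F *ᵥ g₀ +
      (g - g₀) ⬝ᵥ F *ᵥ (g - g₀) := by
    conv_lhs => rw [← add_sub_cancel g₀ g]
    simp only [mulVec_add, dotProduct_add, add_dotProduct]
    ring
  rw [hexpand, hsymm, horth]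
  linarith

end ConstrainedMinimizer

end Matrix

theorem stmt17_general (M L p : ℕ) (c : ℝ) (hc : 0 < c)
    (Y : Matrix (Fin p) (Fin M) ℝ)
    (U : Matrix (Fin L) (Fin M) ℝ) (hU : U.rank = L)
    (utilde : Fin L → ℝ)
    (F : Matrix (Fin M) (Fin M) ℝ)
    (hF : F = c • (1 : Matrix (Fin M) (Fin M) ℝ) + Yᵀ * Y)
    (gstar : Fin M → ℝ)
    (hgmin : ∀ g : Fin M → ℝ, U.mulVec g = utilde →
      gstar ⬝ᵥ F.mulVec gstar ≤ g ⬝ᵥ F.mulVec g)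
    (hY : (Yᵀ * Y).IsHermitian)
    (lam : ℝ) (hlam : lam = ⨆ i : Fin M, hY.eigenvalues i) :
    ∑ i, gstar i ^ 2 ≤ (1 / c) * (utilde ⬝ᵥ (U * F⁻¹ * Uᵀ)⁻¹.mulVec utilde) ∧
    (1 / c) * (utilde ⬝ᵥ (U * F⁻¹ * Uᵀ)⁻¹.mulVec utilde) ≤
      (1 / c) * (c + lam) * (utilde ⬝ᵥ (U * Uᵀ)⁻¹.mulVec utilde) := by
  subst hF hlam
  have hFpd := posDef_smul_one_add_transpose_mul_self Y hc
  have hUinj : Function.Injective Uᵀ.mulVec :=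
    mulVec_transpose_injective_of_rank_eq (by rw [hU, Fintype.card_fin])
  set g₀ := constrainedMinimizer (c • 1 + Yᵀ * Y) U utilde
  set g₁ := constrainedMinimizer 1 U utilde
  have hg₁ : U *ᵥ g₁ = utilde := mulVec_constrainedMinimizer PosDef.one hUinj utilde
  have hg₁norm : g₁ ⬝ᵥ g₁ = utilde ⬝ᵥ (U * Uᵀ)⁻¹ *ᵥ utilde := by
    simpa using constrainedMinimizer_dotProduct_mulVec PosDef.one hUinj utilde
  have hlower : c * (gstar ⬝ᵥ gstar) ≤ g₀ ⬝ᵥ (c • 1 + Yᵀ * Y) *ᵥ g₀ :=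
    (mul_dotProduct_self_le_dotProduct_mulVec Y gstar).trans
      (hgmin g₀ (mulVec_constrainedMinimizer hFpd hUinj utilde))
  have hupper : g₀ ⬝ᵥ (c • 1 + Yᵀ * Y) *ᵥ g₀ ≤
      (c + ⨆ i, hY.eigenvalues i) * (utilde ⬝ᵥ (U * Uᵀ)⁻¹ *ᵥ utilde) :=
    hg₁norm ▸ (constrainedMinimizer_dotProduct_mulVec_le hFpd hUinj hg₁).trans
      (dotProduct_mulVec_le_add_iSup_eigenvalues_mul Y hY g₁)
  rw [constrainedMinimizer_dotProduct_mulVec hFpd hUinj] at hlower hupper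
  rw [show ∑ i, gstar i ^ 2 = gstar ⬝ᵥ gstar by simp [dotProduct, sq], one_div, mul_assoc,
    inv_mul_eq_div, inv_mul_eq_div, le_div_iff₀ hc, div_le_div_iff_of_pos_right hc, mul_comm]
  exact ⟨hlower, hupper⟩

theorem stmt17 (M L p : ℕ) (hLM : L ≤ M) (c : ℝ) (hc : 0 < c)
    (Y : Matrix (Fin p) (Fin M) ℝ)
    (U : Matrix (Fin L) (Fin M) ℝ) (hU : U.rank = L)
    (utilde : Fin L → ℝ)
    (F : Matrix (Fin M) (Fin M) ℝ)
    (hF : F = c • (1 : Matrix (Fin M) (Fin M) ℝ) + Yᵀ * Y)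
    (gstar : Fin M → ℝ)
    (hgfeas : U.mulVec gstar = utilde)
    (hgmin : ∀ g : Fin M → ℝ, U.mulVec g = utilde →
      gstar ⬝ᵥ F.mulVec gstar ≤ g ⬝ᵥ F.mulVec g)
    (hY : (Yᵀ * Y).IsHermitian)
    (lam : ℝ) (hlam : lam = ⨆ i : Fin M, hY.eigenvalues i) :
    ∑ i, gstar i ^ 2 ≤ (1 / c) * (utilde ⬝ᵥ (U * F⁻¹ * Uᵀ)⁻¹.mulVec utilde) ∧
    (1 / c) * (utilde ⬝ᵥ (U * F⁻¹ * Uᵀ)⁻¹.mulVec utilde) ≤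
      (1 / c) * (c + lam) * (utilde ⬝ᵥ (U * Uᵀ)⁻¹.mulVec utilde) :=
  stmt17_general M L p c hc Y U hU utilde F hF gstar hgmin hY lam hlam
end
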